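/- Let α > −1 with α ≠ 0 and β > 0, let Q(p) = (β/α)·((1−p)^{−α/(α+1)} − 1) be the GP(α,β) quantile function, m = ∫_0^1 Q(u) du = β its mean, and ES(p) = (1−p)^{-1} ∫_p^1 Q(u) du. Then for every p ∈ (0,1) with Q(p) > β, the θ-index θ(p) = (1−p)·(ES(p) − Q(p))/(Q(p) − β) equals (1−p)·(α·Q(p) + β)/(Q(p) − β). -/

import Mathlib

/-!
Integrating the power `(1 - u) ^ (-α/(α+1))` gives the tail integral of the GP quantile
function in closed form, `∫_p^1 Q = (1-p)·(β/α)·((α+1)·t - 1)` with `t = (1-p)^(-α/(α+1))`,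
while `Q p = (β/α)·(t - 1)`. Hence the mean excess `ES(p) - Q(p) = β·t = α·Q(p) + β` is affine
in the quantile, which is the θ-index identity; the mean is the case `p = 0`.
-/

open MeasureTheory Set

noncomputable section

def gpQuantile (α β p : ℝ) : ℝ := β / α * ((1 - p) ^ (-(α / (α + 1))) - 1)

def expectedShortfall (q : ℝ → ℝ) (p : ℝ) : ℝ := (1 - p)⁻¹ * ∫ u in p..1, q u

lemma integral_one_sub_rpow {γ : ℝ} (hγ : -1 < γ) (p : ℝ) :
    ∫ u in p..1, (1 - u) ^ γ = (1 - p) ^ (γ + 1) / (γ + 1) := by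
  rw [intervalIntegral.integral_comp_sub_left (fun x => x ^ γ) 1, sub_self,
    integral_rpow (Or.inl hγ), Real.zero_rpow (by linarith), sub_zero]

lemma integral_gpQuantile {α : ℝ} (hα : -1 < α) (β p : ℝ) (hp : p < 1) :
    ∫ u in p..1, gpQuantile α β u
      = (1 - p) * (β / α * ((α + 1) * (1 - p) ^ (-(α / (α + 1))) - 1)) := by
  have hα1 : 0 < α + 1 := by linarith
  have hγ : -1 < -(α / (α + 1)) := by
    rw [neg_lt_neg_iff, div_lt_one hα1]
    linarith
  have hint : IntervalIntegrable (fun u => (1 - u) ^ (-(α / (α + 1)))) volume p 1 := by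
    simpa using (intervalIntegral.intervalIntegrable_rpow' (a := 1 - p) (b := 0) hγ).comp_sub_left 1
  have hγ1 : -(α / (α + 1)) + 1 = (α + 1)⁻¹ := by field_simp; ring
  unfold gpQuantile
  rw [intervalIntegral.integral_const_mul, intervalIntegral.integral_sub hint intervalIntegrable_const,
    integral_one_sub_rpow hγ, intervalIntegral.integral_const, smul_eq_mul, mul_one,
    Real.rpow_add_one (by linarith), hγ1]
  field_simp

lemma expectedShortfall_gpQuantile {α : ℝ} (hα : -1 < α) (β : ℝ) {p : ℝ} (hp : p < 1) :
    expectedShortfall (gpQuantile α β) p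
      = β / α * ((α + 1) * (1 - p) ^ (-(α / (α + 1))) - 1) := by
  rw [expectedShortfall, integral_gpQuantile hα β p hp, inv_mul_cancel_left₀ (by linarith)]

lemma expectedShortfall_gpQuantile_sub {α : ℝ} (hα : -1 < α) (hα0 : α ≠ 0) (β : ℝ) {p : ℝ}
    (hp : p < 1) :
    expectedShortfall (gpQuantile α β) p - gpQuantile α β p = α * gpQuantile α β p + β := by
  rw [expectedShortfall_gpQuantile hα β hp, gpQuantile]
  field_simp
  ring

lemma integral_gpQuantile_zero_one {α : ℝ} (hα : -1 < α) (hα0 : α ≠ 0) (β : ℝ) :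
    ∫ u in (0 : ℝ)..1, gpQuantile α β u = β := by
  rw [integral_gpQuantile hα β 0 one_pos, sub_zero, Real.one_rpow]
  field_simp
  ring

end

theorem gp_theta_index_general
    (α β : ℝ) (hα : -1 < α) (hα0 : α ≠ 0)
    (Q : ℝ → ℝ)
    (hQ : ∀ p ∈ Set.Ioo (0:ℝ) 1,
      Q p = (β / α) * ((1 - p) ^ (-(α / (α + 1))) - 1)) :
    (∫ u in (0:ℝ)..1, Q u) = β
    ∧ ∀ p ∈ Set.Ioo (0:ℝ) 1, β < Q p →
        (1 - p) * ((1 - p)⁻¹ * (∫ u in p..1, Q u) - Q p) / (Q p - β)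
          = (1 - p) * (α * Q p + β) / (Q p - β) := by
  have hQ_eq : EqOn Q (gpQuantile α β) (Ioo 0 1) := hQ
  have hintegral : ∀ p, 0 ≤ p → p < 1 → ∫ u in p..1, Q u = ∫ u in p..1, gpQuantile α β u :=
    fun p hp0 hp1 => intervalIntegral.integral_congr_Ioo_of_le hp1.le
      (hQ_eq.mono (Ioo_subset_Ioo_left hp0))
  refine ⟨by rw [hintegral 0 le_rfl one_pos, integral_gpQuantile_zero_one hα hα0], ?_⟩
  rintro p hp -
  have hmeanExcess := expectedShortfall_gpQuantile_sub hα hα0 β hp.2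
  rw [expectedShortfall, ← hintegral p hp.1.le hp.2, ← hQ_eq hp] at hmeanExcess
  rw [hmeanExcess]

/-- For the GP(α,β) quantile function
`Q p = (β/α)·((1-p)^{-α/(α+1)} - 1)` with `α > -1`, `α ≠ 0`, `β > 0`, the mean is
`m = ∫_0^1 Q = β`, and for every `p ∈ (0,1)` with `Q p > β` the θ-index
`θ(p) = (1-p)·(ES(p) - Q p)/(Q p - β)` equals `(1-p)·(α·Q p + β)/(Q p - β)`,
where `ES(p) = (1-p)⁻¹ ∫_p^1 Q`. -/
theorem gp_theta_index
    (α β : ℝ) (hα : -1 < α) (hα0 : α ≠ 0) (hβ : 0 < β)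
    (Q : ℝ → ℝ)
    (hQ : ∀ p ∈ Set.Ioo (0:ℝ) 1,
      Q p = (β / α) * ((1 - p) ^ (-(α / (α + 1))) - 1)) :
    (∫ u in (0:ℝ)..1, Q u) = β
    ∧ ∀ p ∈ Set.Ioo (0:ℝ) 1, β < Q p →
        (1 - p) * ((1 - p)⁻¹ * (∫ u in p..1, Q u) - Q p) / (Q p - β)
          = (1 - p) * (α * Q p + β) / (Q p - β) :=
  gp_theta_index_general α β hα hα0 Q hQ
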